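/- arXiv:1703.02919 — 3 statements merged into one kernel-verified Lean document; each statement's English description precedes it below -/
import Mathlib

section
/- Let X and Y be infinite-dimensional Banach spaces each having the property that every finite convex combination of slices of the closed unit ball is relatively weakly open in the closed unit ball. Then every finite convex combination of slices of the closed unit ball of X ⊕₁ Y has nonempty interior in the relative weak topology of the closed unit ball of X ⊕₁ Y. -/
/-!
Sort the slices by whether `f i` attains its norm on `X` or on `Y` (the dual of an `ℓ¹`-sum
carries the `ℓ^∞`-norm); let `a` and `b` be the two total weights. In `X`, (P1) makes the
normalised combination of the slices `S(f i ∘ inl, α i / 2)` relatively weakly open, and since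
`X` is infinite-dimensional it contains a point `x₀` of norm one; likewise `y₀` in `Y`. Take
`z = (a x₀, b y₀)`. A point `(u, v)` of the ball weakly near `z` has `‖u‖ ≈ a` and `‖v‖ ≈ b`
(test against norming functionals of `x₀` and `y₀`), so `u / ‖u‖` is weakly near `x₀` and
decomposes along the `X`-slices. Shrinking it to a mass close to `a` and adding a small piece
of `v`, and symmetrically on the `Y` side, writes `(u, v)` as a point of the combination; the
halved widths `α i / 2` absorb the error.
-/

open scoped Pointwise

noncomputable section

def ballSlice (Z : Type*) [NormedAddCommGroup Z] [NormedSpace ℝ Z]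
    (f : StrongDual ℝ Z) (α : ℝ) : Set Z :=
  {z ∈ Metric.closedBall (0 : Z) 1 | 1 - α < f z}

def IsCCS (Z : Type*) [NormedAddCommGroup Z] [NormedSpace ℝ Z] (C : Set Z) : Prop :=
  ∃ (n : ℕ) (f : Fin n → StrongDual ℝ Z) (α lam : Fin n → ℝ),
    0 < n ∧ (∀ i, ‖f i‖ = 1) ∧ (∀ i, 0 < α i) ∧ (∀ i, 0 ≤ lam i) ∧
    (∑ i, lam i) = 1 ∧ C = ∑ i, lam i • ballSlice Z (f i) (α i)

def RelWeakInteriorPt (Z : Type*) [NormedAddCommGroup Z] [NormedSpace ℝ Z]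
    (C : Set Z) (z : Z) : Prop :=
  ∃ (F : Finset (StrongDual ℝ Z)) (δ : ℝ), 0 < δ ∧
    {w ∈ Metric.closedBall (0 : Z) 1 | ∀ f ∈ F, |f w - f z| < δ} ⊆ C

def RelWeaklyOpen (Z : Type*) [NormedAddCommGroup Z] [NormedSpace ℝ Z] (C : Set Z) : Prop :=
  ∀ z ∈ C, RelWeakInteriorPt Z C z

def PropP1 (Z : Type*) [NormedAddCommGroup Z] [NormedSpace ℝ Z] : Prop :=
  ∀ C : Set Z, IsCCS Z C → RelWeaklyOpen Z C

def PropP2 (Z : Type*) [NormedAddCommGroup Z] [NormedSpace ℝ Z] : Prop :=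
  ∀ C : Set Z, IsCCS Z C → ∃ z ∈ C, RelWeakInteriorPt Z C z

def PropP3 (Z : Type*) [NormedAddCommGroup Z] [NormedSpace ℝ Z] : Prop :=
  ∀ C : Set Z, IsCCS Z C → ∃ z ∈ C, ‖z‖ = 1

theorem mem_finsetSum_smul_iff {ι R E : Type*} [AddCommMonoid E] [SMul R E] {s : Finset ι}
    {c : ι → R} {S : ι → Set E} {w : E} :
    w ∈ ∑ i ∈ s, c i • S i ↔ ∃ x : ι → E, (∀ i ∈ s, x i ∈ S i) ∧ ∑ i ∈ s, c i • x i = w := by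
  classical
  rw [Set.mem_finsetSum]
  constructor
  · rintro ⟨y, hy, rfl⟩
    choose x hxS hxy using fun i (hi : i ∈ s) => Set.mem_smul_set.mp (hy hi)
    refine ⟨fun i => if hi : i ∈ s then x i hi else 0, fun i hi => by simpa [hi] using hxS i hi,
      Finset.sum_congr rfl fun i hi => by simpa [hi] using hxy i hi⟩
  · rintro ⟨x, hx, rfl⟩
    exact ⟨fun i => c i • x i, fun hi => Set.smul_mem_smul_set (hx _ hi), rfl⟩

section Slices

variable {Z : Type*} [NormedAddCommGroup Z] [NormedSpace ℝ Z]

theorem mem_ballSlice_iff {f : StrongDual ℝ Z} {α : ℝ} {z : Z} :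
    z ∈ ballSlice Z f α ↔ ‖z‖ ≤ 1 ∧ 1 - α < f z := by
  simp [ballSlice]

theorem ballSlice_nonempty {f : StrongDual ℝ Z} {α : ℝ} (hf : ‖f‖ = 1) (hα : 0 < α) :
    (ballSlice Z f α).Nonempty := by
  obtain ⟨x, hx, hfx⟩ := f.exists_lt_apply_of_lt_opNorm (r := 1 - α) (by linarith)
  rw [Real.norm_eq_abs] at hfx
  rcases abs_cases (f x) with ⟨h, -⟩ | ⟨h, -⟩
  · exact ⟨x, mem_ballSlice_iff.mpr ⟨hx.le, h ▸ hfx⟩⟩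
  · exact ⟨-x, mem_ballSlice_iff.mpr ⟨by simpa using hx.le, by simpa [h] using hfx⟩⟩

theorem sum_smul_ballSlice_eq_zero {ι : Type*} {s : Finset ι} {f : ι → StrongDual ℝ Z}
    {α lam : ι → ℝ} (hf : ∀ i ∈ s, ‖f i‖ = 1) (hα : ∀ i ∈ s, 0 < α i)
    (hlam : ∀ i ∈ s, lam i = 0) : ∑ i ∈ s, lam i • ballSlice Z (f i) (α i) = 0 :=
  Finset.sum_eq_zero fun i hi => by
    rw [hlam i hi, Set.zero_smul_set (ballSlice_nonempty (hf i hi) (hα i hi))]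

theorem abs_apply_le_norm {f : StrongDual ℝ Z} (hf : ‖f‖ ≤ 1) (z : Z) : |f z| ≤ ‖z‖ := by
  simpa using f.le_of_opNorm_le hf z

theorem smul_add_mem_ballSlice {f : StrongDual ℝ Z} (hf : ‖f‖ ≤ 1) {α β s : ℝ} {z e : Z}
    (hz : z ∈ ballSlice Z f β) (hs : 0 ≤ s) (hse : s + ‖e‖ ≤ 1)
    (hclose : 1 - s + ‖e‖ < α - β) : s • z + e ∈ ballSlice Z f α := by
  obtain ⟨hz1, hfz⟩ := mem_ballSlice_iff.mp hz
  have hfz1 : f z ≤ 1 := (le_abs_self _).trans ((abs_apply_le_norm hf z).trans hz1)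
  have hfe : -‖e‖ ≤ f e := neg_le_of_abs_le (abs_apply_le_norm hf e)
  refine mem_ballSlice_iff.mpr ⟨?_, ?_⟩
  · calc ‖s • z + e‖ ≤ s * ‖z‖ + ‖e‖ := by
          simpa [norm_smul, abs_of_nonneg hs] using norm_add_le (s • z) e
      _ ≤ 1 := by nlinarith [norm_nonneg e]
  · rw [map_add, map_smul, smul_eq_mul]
    nlinarith [norm_nonneg e]

theorem IsCCS.nonempty {C : Set Z} (hC : IsCCS Z C) : C.Nonempty := by
  obtain ⟨n, f, α, lam, -, hf, hα, -, -, rfl⟩ := hC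
  choose x hx using fun i => ballSlice_nonempty (hf i) (hα i)
  exact ⟨_, mem_finsetSum_smul_iff.mpr ⟨x, fun i _ => hx i, rfl⟩⟩

theorem IsCCS.subset_closedBall {C : Set Z} (hC : IsCCS Z C) : C ⊆ Metric.closedBall 0 1 := by
  obtain ⟨n, f, α, lam, -, -, -, hlam, hlam1, rfl⟩ := hC
  intro w hw
  obtain ⟨x, hx, rfl⟩ := mem_finsetSum_smul_iff.mp hw
  exact (convex_closedBall 0 1).sum_mem (fun i _ => hlam i) hlam1 fun i hi => (hx i hi).1

end Slices

section InfiniteDimensional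

variable {E : Type*} [NormedAddCommGroup E] [NormedSpace ℝ E]

theorem exists_norm_eq_one_forall_apply_eq_zero (hinf : ¬ FiniteDimensional ℝ E)
    (F : Finset (StrongDual ℝ E)) : ∃ v : E, ‖v‖ = 1 ∧ ∀ g ∈ F, g v = 0 := by
  obtain ⟨v, hv, hv0⟩ : ∃ v : E, (∀ g ∈ F, g v = 0) ∧ v ≠ 0 := by
    by_contra! h
    let L : E →ₗ[ℝ] (F → ℝ) := LinearMap.pi fun g => (g : StrongDual ℝ E).toLinearMap
    refine hinf (Module.Finite.of_injective L ?_)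
    rw [← LinearMap.ker_eq_bot, LinearMap.ker_eq_bot']
    exact fun v hv => h v fun g hg => congrFun hv ⟨g, hg⟩
  refine ⟨‖v‖⁻¹ • v, norm_smul_inv_norm hv0, fun g hg => by simp [hv g hg]⟩

theorem exists_norm_add_smul_eq_one {z v : E} (hz : ‖z‖ ≤ 1) (hv : ‖v‖ = 1) :
    ∃ t : ℝ, ‖z + t • v‖ = 1 := by
  have h2 : 1 ≤ ‖z + (2 : ℝ) • v‖ := by
    have := norm_sub_norm_le ((2 : ℝ) • v) (-z)
    rw [norm_smul, hv, norm_neg, sub_neg_eq_add, add_comm] at this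
    norm_num at this
    linarith
  obtain ⟨t, -, ht⟩ := intermediate_value_Icc (zero_le_two (α := ℝ))
    (f := fun t : ℝ => ‖z + t • v‖) (by fun_prop) ⟨by simpa using hz, h2⟩
  exact ⟨t, ht⟩

theorem RelWeakInteriorPt.exists_norm_eq_one (hinf : ¬ FiniteDimensional ℝ E) {C : Set E} {z : E}
    (hz : RelWeakInteriorPt E C z) (hz1 : ‖z‖ ≤ 1) : ∃ x ∈ C, ‖x‖ = 1 := by
  obtain ⟨F, δ, hδ, hsub⟩ := hz
  obtain ⟨v, hv1, hv0⟩ := exists_norm_eq_one_forall_apply_eq_zero hinf F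
  obtain ⟨t, ht⟩ := exists_norm_add_smul_eq_one hz1 hv1
  refine ⟨z + t • v, hsub ⟨mem_closedBall_zero_iff.mpr ht.le, fun g hg => ?_⟩, ht⟩
  simpa [hv0 g hg] using hδ

theorem exists_norm_eq_one_smul_mem_sum_smul_ballSlice (hinf : ¬ FiniteDimensional ℝ E)
    (hP1 : PropP1 E) {ι : Type*} {s : Finset ι} {G : ι → StrongDual ℝ E} {β lam : ι → ℝ}
    (hG : ∀ i ∈ s, ‖G i‖ = 1) (hβ : ∀ i ∈ s, 0 < β i) (hlam : ∀ i ∈ s, 0 ≤ lam i)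
    (hc : 0 < ∑ i ∈ s, lam i) :
    ∃ x₀ : E, ‖x₀‖ = 1 ∧ ∃ (F : Finset (StrongDual ℝ E)) (δ : ℝ), 0 < δ ∧
      ∀ m ∈ Metric.closedBall (0 : E) 1, (∀ g ∈ F, |g m - g x₀| < δ) →
        (∑ i ∈ s, lam i) • m ∈ ∑ i ∈ s, lam i • ballSlice E (G i) (β i) := by
  set c := ∑ i ∈ s, lam i
  set T := ∑ i ∈ s, lam i • ballSlice E (G i) (β i)
  have hD : IsCCS E (c⁻¹ • T) := by
    let e := s.equivFin
    refine ⟨s.card, fun k => G (e.symm k), fun k => β (e.symm k), fun k => lam (e.symm k) / c,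
      Finset.card_pos.mpr (Finset.nonempty_of_sum_ne_zero hc.ne'), fun k => hG _ (e.symm k).2,
      fun k => hβ _ (e.symm k).2, fun k => div_nonneg (hlam _ (e.symm k).2) hc.le, ?_, ?_⟩
    · rw [e.symm.sum_comp (fun i : s => lam i / c), Finset.sum_coe_sort s (fun i => lam i / c),
        ← Finset.sum_div, div_self hc.ne']
    · rw [e.symm.sum_comp (fun i : s => (lam i / c) • ballSlice E (G i) (β i)),
        Finset.sum_coe_sort s (fun i => (lam i / c) • ballSlice E (G i) (β i)), Finset.smul_sum]
      simp_rw [smul_smul, div_eq_inv_mul]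
  obtain ⟨z, hz⟩ := hD.nonempty
  obtain ⟨x₀, hx₀, hx₀1⟩ := (hP1 _ hD z hz).exists_norm_eq_one hinf
    (mem_closedBall_zero_iff.mp (hD.subset_closedBall hz))
  obtain ⟨F, δ, hδ, hsub⟩ := hP1 _ hD x₀ hx₀
  refine ⟨x₀, hx₀1, F, δ, hδ, fun m hm hmF => ?_⟩
  simpa [smul_inv_smul₀ hc.ne'] using Set.smul_mem_smul_set (a := c) (hsub ⟨hm, hmF⟩)

end InfiniteDimensional

section Lifting

variable {E Z : Type*} [NormedAddCommGroup E] [NormedSpace ℝ E]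
  [NormedAddCommGroup Z] [NormedSpace ℝ Z]

theorem mem_ballSlice_of_mem_ballSlice_comp {j : E →L[ℝ] Z} (hj : ∀ x, ‖j x‖ ≤ ‖x‖)
    {f : StrongDual ℝ Z} {β : ℝ} {x : E}
    (hx : x ∈ ballSlice E (f.comp j) β) : j x ∈ ballSlice Z f β := by
  obtain ⟨hx1, hfx⟩ := mem_ballSlice_iff.mp hx
  exact mem_ballSlice_iff.mpr ⟨(hj x).trans hx1, hfx⟩

theorem smul_add_mem_sum_smul_ballSlice {j : E →L[ℝ] Z} (hj : ∀ x, ‖j x‖ ≤ ‖x‖) {ι : Type*}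
    {s : Finset ι} {f : ι → StrongDual ℝ Z} {α β lam : ι → ℝ} (hf : ∀ i ∈ s, ‖f i‖ ≤ 1)
    {m : E} {σ : ℝ} {e : Z}
    (hm : (∑ i ∈ s, lam i) • m ∈ ∑ i ∈ s, lam i • ballSlice E ((f i).comp j) (β i))
    (hc : 0 < ∑ i ∈ s, lam i) (hσ : 0 ≤ σ) (hσe : σ + ‖e‖ ≤ ∑ i ∈ s, lam i)
    (hclose : ∀ i ∈ s, (∑ i ∈ s, lam i) - σ + ‖e‖ < (∑ i ∈ s, lam i) * (α i - β i)) :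
    σ • j m + e ∈ ∑ i ∈ s, lam i • ballSlice Z (f i) (α i) := by
  set c := ∑ i ∈ s, lam i
  obtain ⟨x, hx, hxm⟩ := mem_finsetSum_smul_iff.mp hm
  have hce : ‖c⁻¹ • e‖ = ‖e‖ / c := by
    rw [norm_smul, norm_inv, Real.norm_of_nonneg hc.le, inv_mul_eq_div]
  refine mem_finsetSum_smul_iff.mpr ⟨fun i => (σ / c) • j (x i) + c⁻¹ • e, fun i hi => ?_, ?_⟩
  · refine smul_add_mem_ballSlice (hf i hi) (mem_ballSlice_of_mem_ballSlice_comp hj (hx i hi))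
      (div_nonneg hσ hc.le) ?_ ?_ <;> rw [hce]
    · rw [← add_div, div_le_one hc]; exact hσe
    · have : 1 - σ / c + ‖e‖ / c = (c - σ + ‖e‖) / c := by field_simp
      rw [this, div_lt_iff₀ hc, mul_comm]; exact hclose i hi
  · calc ∑ i ∈ s, lam i • ((σ / c) • j (x i) + c⁻¹ • e)
        = (σ / c) • j (∑ i ∈ s, lam i • x i) + (∑ i ∈ s, lam i) • c⁻¹ • e := by
          simp only [smul_add, Finset.sum_add_distrib, map_sum, map_smul, Finset.smul_sum,
            ← Finset.sum_smul, smul_comm (lam _) (σ / c)]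
      _ = σ • j m + e := by
          rw [hxm, map_smul, smul_smul, div_mul_cancel₀ _ hc.ne']
          exact congrArg _ (smul_inv_smul₀ hc.ne' e)

end Lifting

section Normalisation

variable {E : Type*} [NormedAddCommGroup E] [NormedSpace ℝ E]

theorem abs_apply_inv_norm_smul_sub_lt (g : StrongDual ℝ E) {u x : E} (hx : ‖x‖ = 1) {c δ : ℝ}
    (hg : |g u - g (c • x)| < δ) (hu : |‖u‖ - c| < δ) (hu0 : 0 < ‖u‖) :
    |g (‖u‖⁻¹ • u) - g x| < (1 + ‖g‖) * δ / ‖u‖ := by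
  have hgx : |g x| ≤ ‖g‖ := by simpa [hx] using g.le_opNorm x
  have : g (‖u‖⁻¹ • u) - g x = ((g u - g (c • x)) + (c - ‖u‖) * g x) / ‖u‖ := by
    simp only [map_smul, smul_eq_mul]; field_simp; ring
  rw [this, abs_div, abs_of_pos hu0, div_lt_div_iff_of_pos_right hu0]
  rw [abs_sub_comm] at hu
  calc |g u - g (c • x) + (c - ‖u‖) * g x| ≤ |g u - g (c • x)| + |c - ‖u‖| * |g x| :=
        (abs_add_le _ _).trans_eq (by rw [abs_mul])
    _ < δ + δ * ‖g‖ :=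
        add_lt_add_of_lt_of_le hg (mul_le_mul hu.le hgx (abs_nonneg _) ((abs_nonneg _).trans hg.le))
    _ = (1 + ‖g‖) * δ := by ring

theorem norm_sub_smul_inv_norm_smul {v : E} {τ : ℝ} (hτ : 0 ≤ τ) (hτv : τ ≤ ‖v‖) :
    ‖v - τ • ‖v‖⁻¹ • v‖ = ‖v‖ - τ := by
  rcases (norm_nonneg v).eq_or_lt with hv | hv
  · obtain rfl : v = 0 := norm_eq_zero.mp hv.symm
    simp [le_antisymm (by simpa using hτv) hτ]
  · have hcoef : 0 ≤ 1 - τ * ‖v‖⁻¹ := by rw [sub_nonneg, ← div_eq_mul_inv, div_le_one hv]; exact hτv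
    rw [smul_smul, show v - (τ * ‖v‖⁻¹) • v = (1 - τ * ‖v‖⁻¹) • v by rw [sub_smul, one_smul],
      norm_smul, Real.norm_of_nonneg hcoef, sub_mul, one_mul, mul_assoc, inv_mul_cancel₀ hv.ne',
      mul_one]

end Normalisation

theorem min_add_sub_min_le {p q a b N δ : ℝ} (hp : 0 ≤ p) (hq : 0 ≤ q) (ha : 0 ≤ a) (hb : 0 ≤ b)
    (hab : a + b = 1) (hN : p + q = N) (hN1 : N ≤ 1) (hpa : |p - a| < δ) (hqb : |q - b| < δ) :
    min p (a * N) + (q - min q (b * N)) ≤ a ∧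
      a - min p (a * N) + (q - min q (b * N)) ≤ 3 * δ := by
  rw [abs_lt] at hpa hqb
  have h1 : a * (1 - N) ≤ 1 - N := by nlinarith
  have h2 : a * (q - b) ≤ a * δ := by nlinarith
  have h3 : b * (a - p) ≤ b * δ := by nlinarith
  rcases min_cases p (a * N) with ⟨hσ, hpN⟩ | ⟨hσ, hpN⟩ <;>
    rcases min_cases q (b * N) with ⟨hτ, hqN⟩ | ⟨hτ, hqN⟩ <;> rw [hσ, hτ] <;>
    constructor <;> nlinarith

section Side

variable {E Z : Type*} [NormedAddCommGroup E] [NormedSpace ℝ E]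
  [NormedAddCommGroup Z] [NormedSpace ℝ Z]

/-- The contribution of one summand `E`, embedded in `Z` by `j` with total weight `c`, to a
combination `T`: every `u` weakly near `c • x₀` with `‖u‖ ≈ c`, normalised, shrunk to a mass
`σ ≈ c` and perturbed by a small `e`, lands in `T`. -/
def HasWeakBlock (j : E →L[ℝ] Z) (c : ℝ) (T : Set Z) : Prop :=
  ∃ x₀ : E, ‖x₀‖ ≤ 1 ∧ ∃ (F : Finset (StrongDual ℝ E)) (δ₀ : ℝ), 0 < δ₀ ∧
    ∀ δ, 0 < δ → δ ≤ δ₀ → ∀ u : E, (∀ g ∈ F, |g u - g (c • x₀)| < δ) →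
      c - δ < ‖u‖ ∧ (|‖u‖ - c| < δ → ∀ (σ : ℝ) (e : Z), 0 ≤ σ → σ + ‖e‖ ≤ c →
        c - σ + ‖e‖ ≤ 3 * δ → σ • j (‖u‖⁻¹ • u) + e ∈ T)

theorem hasWeakBlock_sum_smul_ballSlice_of_pos (hinf : ¬ FiniteDimensional ℝ E)
    (hP1 : PropP1 E) {j : E →L[ℝ] Z} (hj : ∀ x, ‖j x‖ ≤ ‖x‖) {ι : Type*} {s : Finset ι}
    {f : ι → StrongDual ℝ Z} {α lam : ι → ℝ} (hf : ∀ i ∈ s, ‖f i‖ = 1)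
    (hfj : ∀ i ∈ s, ‖(f i).comp j‖ = 1) (hα : ∀ i ∈ s, 0 < α i) (hlam : ∀ i ∈ s, 0 ≤ lam i)
    (hc : 0 < ∑ i ∈ s, lam i) :
    HasWeakBlock j (∑ i ∈ s, lam i) (∑ i ∈ s, lam i • ballSlice Z (f i) (α i)) := by
  classical
  set c := ∑ i ∈ s, lam i
  obtain ⟨x₀, hx₀, F, δ₁, hδ₁, hF⟩ := exists_norm_eq_one_smul_mem_sum_smul_ballSlice hinf hP1
    (β := fun i => α i / 2) hfj (fun i hi => half_pos (hα i hi)) hlam hc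
  obtain ⟨x₀', hx₀'1, hx₀'x₀⟩ := exists_dual_vector ℝ x₀ (by simp [hx₀])
  have hs : s.Nonempty := Finset.nonempty_of_sum_ne_zero hc.ne'
  set α₀ := s.inf' hs α
  have hα₀ : 0 < α₀ := (Finset.lt_inf'_iff hs).mpr hα
  set M := ∑ g ∈ F, ‖g‖
  have hM : ∀ g ∈ F, ‖g‖ ≤ M := fun g hg => Finset.single_le_sum (fun g _ => norm_nonneg g) hg
  have hM0 : 0 ≤ M := Finset.sum_nonneg fun g _ => norm_nonneg g
  -- `δ ≤ c α₀ / 8` leaves `3 δ < c α i / 2`, `δ ≤ c / 2` keeps `‖u‖ > c / 2`, and the last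
  -- bound controls the normalisation error `(1 + ‖g‖) δ / ‖u‖`.
  refine ⟨x₀, hx₀.le, insert x₀' F, c * min (α₀ / 8) (min (1 / 2) (δ₁ / (2 * (1 + M)))),
    by positivity, fun δ hδ hδ₀ u hu => ⟨?_, ?_⟩⟩
  · have h := (abs_lt.mp (hu x₀' (Finset.mem_insert_self _ _))).1
    simp only [map_smul, hx₀'x₀, hx₀, RCLike.ofReal_one, smul_eq_mul, mul_one] at h
    linarith [((le_abs_self _).trans (by simpa [hx₀'1] using x₀'.le_opNorm u) : x₀' u ≤ ‖u‖)]
  intro huc σ e hσ hσe hclose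
  have hδα : δ ≤ c * (α₀ / 8) := hδ₀.trans (by gcongr; exact min_le_left _ _)
  have hδc : δ ≤ c * (1 / 2) :=
    hδ₀.trans (by gcongr; exact (min_le_right _ _).trans (min_le_left _ _))
  have hδM : δ ≤ c * (δ₁ / (2 * (1 + M))) :=
    hδ₀.trans (by gcongr; exact (min_le_right _ _).trans (min_le_right _ _))
  have hu0 : c / 2 < ‖u‖ := by linarith [(abs_lt.mp huc).1]
  have hm : ‖u‖⁻¹ • u ∈ Metric.closedBall (0 : E) 1 := by
    rw [mem_closedBall_zero_iff, norm_smul, norm_inv, norm_norm]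
    exact inv_mul_le_one_of_le₀ le_rfl (norm_nonneg u)
  refine smul_add_mem_sum_smul_ballSlice hj (fun i hi => (hf i hi).le)
    (hF _ hm fun g hg => ?_) hc hσ hσe fun i hi => ?_
  · refine (abs_apply_inv_norm_smul_sub_lt g hx₀ (hu g (Finset.mem_insert_of_mem hg)) huc
      (by linarith)).trans_le ?_
    rw [div_le_iff₀ (by linarith)]
    rw [mul_div_assoc', le_div_iff₀ (by positivity)] at hδM
    nlinarith [hM g hg, norm_nonneg g]
  · have : α₀ ≤ α i := Finset.inf'_le _ hi
    nlinarith

theorem hasWeakBlock_sum_smul_ballSlice (hinf : ¬ FiniteDimensional ℝ E)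
    (hP1 : PropP1 E) {j : E →L[ℝ] Z} (hj : ∀ x, ‖j x‖ ≤ ‖x‖) {ι : Type*} {s : Finset ι}
    {f : ι → StrongDual ℝ Z} {α lam : ι → ℝ} (hf : ∀ i ∈ s, ‖f i‖ = 1)
    (hfj : ∀ i ∈ s, ‖(f i).comp j‖ = 1) (hα : ∀ i ∈ s, 0 < α i) (hlam : ∀ i ∈ s, 0 ≤ lam i) :
    HasWeakBlock j (∑ i ∈ s, lam i) (∑ i ∈ s, lam i • ballSlice Z (f i) (α i)) := by
  rcases (Finset.sum_nonneg hlam).eq_or_lt with hc | hc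
  · refine ⟨0, by simp, ∅, 1, one_pos, fun δ hδ _ u _ => ⟨by linarith [norm_nonneg u], ?_⟩⟩
    intro _ σ e hσ hσe _
    obtain rfl : σ = 0 := by linarith [norm_nonneg e]
    obtain rfl : e = 0 := norm_eq_zero.mp (by linarith [norm_nonneg e])
    rw [sum_smul_ballSlice_eq_zero hf hα ((Finset.sum_eq_zero_iff_of_nonneg hlam).mp hc.symm)]
    simp
  · exact hasWeakBlock_sum_smul_ballSlice_of_pos hinf hP1 hj hf hfj hα hlam hc

end Side

section L1

variable {X Y : Type*} [NormedAddCommGroup X] [NormedSpace ℝ X]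
  [NormedAddCommGroup Y] [NormedSpace ℝ Y]

def inl₁ : X →L[ℝ] WithLp 1 (X × Y) :=
  (WithLp.prodContinuousLinearEquiv 1 ℝ X Y).symm.toContinuousLinearMap.comp
    (ContinuousLinearMap.inl ℝ X Y)

def inr₁ : Y →L[ℝ] WithLp 1 (X × Y) :=
  (WithLp.prodContinuousLinearEquiv 1 ℝ X Y).symm.toContinuousLinearMap.comp
    (ContinuousLinearMap.inr ℝ X Y)

@[simp] theorem inl₁_apply (x : X) : (inl₁ x : WithLp 1 (X × Y)) = WithLp.toLp 1 (x, 0) := rfl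

@[simp] theorem inr₁_apply (y : Y) : (inr₁ y : WithLp 1 (X × Y)) = WithLp.toLp 1 (0, y) := rfl

theorem norm_inl₁ (x : X) : ‖(inl₁ x : WithLp 1 (X × Y))‖ = ‖x‖ := by simp

theorem norm_inr₁ (y : Y) : ‖(inr₁ y : WithLp 1 (X × Y))‖ = ‖y‖ := by simp

theorem inl₁_fst_add_inr₁_snd (w : WithLp 1 (X × Y)) : inl₁ w.fst + inr₁ w.snd = w := by
  apply WithLp.ofLp_injective
  ext <;> simp

/-- The dual of an `ℓ¹`-sum carries the `ℓ^∞`-norm. -/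
theorem norm_comp_inl₁_eq_one_or_norm_comp_inr₁_eq_one {f : StrongDual ℝ (WithLp 1 (X × Y))}
    (hf : ‖f‖ = 1) : ‖f.comp inl₁‖ = 1 ∨ ‖f.comp inr₁‖ = 1 := by
  have hX : ‖f.comp inl₁‖ ≤ 1 := f.comp inl₁ |>.opNorm_le_bound zero_le_one fun x => by
    simpa [hf] using f.le_opNorm (inl₁ x)
  have hY : ‖f.comp inr₁‖ ≤ 1 := f.comp inr₁ |>.opNorm_le_bound zero_le_one fun y => by
    simpa [hf] using f.le_opNorm (inr₁ y)
  have hmax : ‖f‖ ≤ max ‖f.comp inl₁‖ ‖f.comp inr₁‖ :=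
    f.opNorm_le_bound (le_max_of_le_left (norm_nonneg _)) fun w => by
      conv_lhs => rw [← inl₁_fst_add_inr₁_snd w, map_add]
      rw [WithLp.prod_norm_eq_of_L1, mul_add]
      refine (norm_add_le _ _).trans (add_le_add ?_ ?_)
      · exact ((f.comp inl₁).le_opNorm w.fst).trans (by gcongr; exact le_max_left _ _)
      · exact ((f.comp inr₁).le_opNorm w.snd).trans (by gcongr; exact le_max_right _ _)
  rcases le_max_iff.mp (hf ▸ hmax) with h | h
  · exact Or.inl (le_antisymm hX h)
  · exact Or.inr (le_antisymm hY h)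

theorem mem_add_of_norm_fst_norm_snd {a b δ : ℝ} (ha : 0 ≤ a) (hb : 0 ≤ b) (hab : a + b = 1)
    {T T' : Set (WithLp 1 (X × Y))} {w : WithLp 1 (X × Y)}
    (hw : w ∈ Metric.closedBall 0 1) (hu : a - δ < ‖w.fst‖) (hv : b - δ < ‖w.snd‖)
    (hT : |‖w.fst‖ - a| < δ → ∀ (σ : ℝ) (e : WithLp 1 (X × Y)), 0 ≤ σ → σ + ‖e‖ ≤ a →
      a - σ + ‖e‖ ≤ 3 * δ → σ • inl₁ (‖w.fst‖⁻¹ • w.fst) + e ∈ T)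
    (hT' : |‖w.snd‖ - b| < δ → ∀ (τ : ℝ) (e : WithLp 1 (X × Y)), 0 ≤ τ → τ + ‖e‖ ≤ b →
      b - τ + ‖e‖ ≤ 3 * δ → τ • inr₁ (‖w.snd‖⁻¹ • w.snd) + e ∈ T') :
    w ∈ T + T' := by
  set u := w.fst
  set v := w.snd
  set N := ‖u‖ + ‖v‖
  have hN : N ≤ 1 := by simpa [WithLp.prod_norm_eq_of_L1] using mem_closedBall_zero_iff.mp hw
  have hua : |‖u‖ - a| < δ := abs_sub_lt_iff.mpr ⟨by linarith, by linarith⟩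
  have hvb : |‖v‖ - b| < δ := abs_sub_lt_iff.mpr ⟨by linarith, by linarith⟩
  -- Split the mass `N` in the ratio `a : b`, capped by the norms available on each side.
  set σ := min ‖u‖ (a * N)
  set τ := min ‖v‖ (b * N)
  have hσ : 0 ≤ σ := le_min (norm_nonneg u) (by positivity)
  have hτ : 0 ≤ τ := le_min (norm_nonneg v) (by positivity)
  have he : ‖(inr₁ (v - τ • ‖v‖⁻¹ • v) : WithLp 1 (X × Y))‖ = ‖v‖ - τ := by
    rw [norm_inr₁, norm_sub_smul_inv_norm_smul hτ (min_le_left _ _)]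
  have he' : ‖(inl₁ (u - σ • ‖u‖⁻¹ • u) : WithLp 1 (X × Y))‖ = ‖u‖ - σ := by
    rw [norm_inl₁, norm_sub_smul_inv_norm_smul hσ (min_le_left _ _)]
  obtain ⟨hσa, hσδ⟩ := min_add_sub_min_le (norm_nonneg u) (norm_nonneg v) ha hb hab rfl hN hua hvb
  obtain ⟨hτb, hτδ⟩ := min_add_sub_min_le (norm_nonneg v) (norm_nonneg u) hb ha
    (by rw [add_comm, hab]) (add_comm _ _) hN hvb hua
  have hsplit : (σ • inl₁ (‖u‖⁻¹ • u) + inr₁ (v - τ • ‖v‖⁻¹ • v)) +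
      (τ • inr₁ (‖v‖⁻¹ • v) + inl₁ (u - σ • ‖u‖⁻¹ • u)) = w := by
    rw [← inl₁_fst_add_inr₁_snd w]
    simp only [map_sub, map_smul]
    abel
  rw [← hsplit]
  exact Set.add_mem_add (hT hua σ _ hσ (he ▸ hσa) (he ▸ hσδ))
    (hT' hvb τ _ hτ (he' ▸ hτb) (he' ▸ hτδ))

theorem toLp_smul_smul_mem_closedBall {a b : ℝ} (ha : 0 ≤ a) (hb : 0 ≤ b) (hab : a + b = 1)
    {x : X} {y : Y} (hx : ‖x‖ ≤ 1) (hy : ‖y‖ ≤ 1) :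
    WithLp.toLp 1 (a • x, b • y) ∈ Metric.closedBall (0 : WithLp 1 (X × Y)) 1 := by
  rw [mem_closedBall_zero_iff, WithLp.prod_norm_eq_of_L1]
  simp only [WithLp.toLp_fst, WithLp.toLp_snd, norm_smul, Real.norm_of_nonneg ha,
    Real.norm_of_nonneg hb]
  nlinarith

theorem exists_mem_relWeakInteriorPt_add {a b : ℝ} (ha : 0 ≤ a) (hb : 0 ≤ b) (hab : a + b = 1)
    {T T' : Set (WithLp 1 (X × Y))} (hT : HasWeakBlock inl₁ a T) (hT' : HasWeakBlock inr₁ b T') :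
    ∃ z ∈ T + T', RelWeakInteriorPt _ (T + T') z := by
  classical
  obtain ⟨x₀, hx₀, F, δ, hδ, hX⟩ := hT
  obtain ⟨y₀, hy₀, F', δ', hδ', hY⟩ := hT'
  set z : WithLp 1 (X × Y) := WithLp.toLp 1 (a • x₀, b • y₀)
  have hmem : ∀ w ∈ Metric.closedBall 0 1,
      (∀ φ ∈ F.image (·.comp (WithLp.fstL 1 ℝ X Y)) ∪ F'.image (·.comp (WithLp.sndL 1 ℝ X Y)),
        |φ w - φ z| < min δ δ') → w ∈ T + T' := by
    intro w hw hwz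
    obtain ⟨hu, hwT⟩ := hX _ (lt_min hδ hδ') (min_le_left _ _) w.fst fun g hg => by
      simpa [z] using hwz _ (Finset.mem_union_left _ (Finset.mem_image_of_mem _ hg))
    obtain ⟨hv, hwT'⟩ := hY _ (lt_min hδ hδ') (min_le_right _ _) w.snd fun g hg => by
      simpa [z] using hwz _ (Finset.mem_union_right _ (Finset.mem_image_of_mem _ hg))
    exact mem_add_of_norm_fst_norm_snd ha hb hab hw hu hv hwT hwT'
  exact ⟨z, hmem z (toLp_smul_smul_mem_closedBall ha hb hab hx₀ hy₀) fun φ _ => by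
    simp [hδ, hδ'], _, _, lt_min hδ hδ', fun w hw => hmem w hw.1 hw.2⟩

end L1

theorem propP2_one_sum_of_propP1_general
    {X Y : Type*} [NormedAddCommGroup X] [NormedSpace ℝ X]
    [NormedAddCommGroup Y] [NormedSpace ℝ Y]
    (hXinf : ¬ FiniteDimensional ℝ X) (hYinf : ¬ FiniteDimensional ℝ Y)
    (hX : PropP1 X) (hY : PropP1 Y) :
    PropP2 (WithLp 1 (X × Y)) := by
  classical
  rintro C ⟨n, f, α, lam, -, hf, hα, hlam, hlam1, rfl⟩
  set A := Finset.univ.filter fun i => ‖(f i).comp inl₁‖ = 1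
  have hAc : ∀ i ∈ Aᶜ, ‖(f i).comp inr₁‖ = 1 := fun i hi =>
    (norm_comp_inl₁_eq_one_or_norm_comp_inr₁_eq_one (hf i)).resolve_left (by simpa [A] using hi)
  rw [← Finset.sum_add_sum_compl A]
  exact exists_mem_relWeakInteriorPt_add (Finset.sum_nonneg fun i _ => hlam i)
    (Finset.sum_nonneg fun i _ => hlam i) ((Finset.sum_add_sum_compl A lam).trans hlam1)
    (hasWeakBlock_sum_smul_ballSlice hXinf hX (fun x => (norm_inl₁ x).le) (fun i _ => hf i)
      (fun i hi => (Finset.mem_filter.mp hi).2) (fun i _ => hα i) (fun i _ => hlam i))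
    (hasWeakBlock_sum_smul_ballSlice hYinf hY (fun y => (norm_inr₁ y).le) (fun i _ => hf i)
      hAc (fun i _ => hα i) (fun i _ => hlam i))

/-- If both infinite-dimensional Banach spaces `X` and `Y` have the
property that every finite convex combination of slices of the closed unit ball is
relatively weakly open, then every finite convex combination of slices of the closed
unit ball of `X ⊕₁ Y` has nonempty interior in the relative weak topology of the
closed unit ball of `X ⊕₁ Y`. -/
theorem propP2_one_sum_of_propP1
    {X Y : Type*} [NormedAddCommGroup X] [NormedSpace ℝ X] [CompleteSpace X]
    [NormedAddCommGroup Y] [NormedSpace ℝ Y] [CompleteSpace Y]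
    (hXinf : ¬ FiniteDimensional ℝ X) (hYinf : ¬ FiniteDimensional ℝ Y)
    (hX : PropP1 X) (hY : PropP1 Y) :
    PropP2 (WithLp 1 (X × Y)) :=
  propP2_one_sum_of_propP1_general hXinf hYinf hX hY
end
end

section
/- Let X and Y be Banach spaces. Then every finite convex combination of slices of the closed unit ball of X ⊕_∞ Y has nonempty interior in the relative weak topology of the closed unit ball if and only if both X and Y have the corresponding property. -/
open scoped Pointwise

noncomputable section

/-!
Both summands of `Z = X ⊕_∞ Y` are M-summands. Forward: pulling a convex combination of slices
of `B_X` back along the projection `P : Z → X` gives one of `B_Z`, which `P` maps into the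
original. If `z₀` is a relative weak interior point of the pulled-back set, replacing its
`X`-coordinate by any `w ∈ B_X` weakly close to `P z₀` stays in `B_Z` (the norm is a max) and
weakly close to `z₀`; so `P z₀` is an interior point of the original combination.

Backward: a norm-one functional `f` on `Z` splits as `f(x, y) = g x + h y` with
`‖g‖, ‖h‖ ≤ 1 ≤ ‖g‖ + ‖h‖`, so `S(f, α)` contains the product of the closed slices of `g / ‖g‖`
and `h / ‖h‖` at depth `α / 2`. Hence a convex combination of slices of `B_Z` contains the
product of convex combinations of slices of `B_X` and `B_Y`, and a pair of interior points of
those is an interior point in `Z`.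
-/

open Set

section SumSmul

variable {ι 𝕜 E : Type*} [Fintype ι]

theorem mem_sum_smul_set_iff [AddCommMonoid E] [SMul 𝕜 E] {lam : ι → 𝕜} {S : ι → Set E}
    {z : E} : z ∈ ∑ i, lam i • S i ↔ ∃ c : ι → E, (∀ i, c i ∈ S i) ∧ ∑ i, lam i • c i = z := by
  simp only [mem_fintype_sum, mem_smul_set]
  constructor
  · rintro ⟨g, hg, rfl⟩
    choose c hc hcg using hg
    exact ⟨c, hc, by simp only [hcg]⟩
  · rintro ⟨c, hc, rfl⟩
    exact ⟨_, fun i => ⟨c i, hc i, rfl⟩, rfl⟩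

theorem sum_smul_subset_sum_smul [AddCommMonoid E] [SMul 𝕜 E] {lam : ι → 𝕜}
    {S T : ι → Set E} (h : ∀ i, S i ⊆ T i) : ∑ i, lam i • S i ⊆ ∑ i, lam i • T i :=
  finsetSum_subset_finsetSum _ _ _ fun i _ => smul_set_mono (h i)

theorem Convex.sum_smul_subset [AddCommGroup E] [Module ℝ E] {s : Set E} (hs : Convex ℝ s)
    {lam : ι → ℝ} (hlam : ∀ i, 0 ≤ lam i) (hsum : ∑ i, lam i = 1) {S : ι → Set E}
    (hS : ∀ i, S i ⊆ s) : ∑ i, lam i • S i ⊆ s := by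
  intro z hz
  obtain ⟨c, hc, rfl⟩ := mem_sum_smul_set_iff.1 hz
  exact hs.sum_mem (fun i _ => hlam i) hsum fun i _ => hS i (hc i)

end SumSmul

theorem RelWeakInteriorPt.mono {E : Type*} [NormedAddCommGroup E] [NormedSpace ℝ E]
    {C D : Set E} {z : E} (hCD : C ⊆ D) (h : RelWeakInteriorPt E C z) :
    RelWeakInteriorPt E D z :=
  let ⟨F, δ, hδ, hF⟩ := h
  ⟨F, δ, hδ, hF.trans hCD⟩

section MSummand

variable {Z E : Type*} [NormedAddCommGroup Z] [NormedSpace ℝ Z]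
  [NormedAddCommGroup E] [NormedSpace ℝ E]

/-- `J` embeds `E` isometrically as an M-summand of `Z` with complement `ker P`,
i.e. `Z = J(E) ⊕_∞ ker P`. -/
structure IsMSummand (P : Z →L[ℝ] E) (J : E →L[ℝ] Z) : Prop where
  left_inv : ∀ x, P (J x) = x
  norm_eq_max : ∀ z, ‖z‖ = max ‖P z‖ ‖z - J (P z)‖

namespace IsMSummand

variable {P : Z →L[ℝ] E} {J : E →L[ℝ] Z}

theorem norm_apply_le (h : IsMSummand P J) (z : Z) : ‖P z‖ ≤ ‖z‖ :=
  (h.norm_eq_max z).symm ▸ le_max_left _ _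

theorem norm_sub_le (h : IsMSummand P J) (z : Z) : ‖z - J (P z)‖ ≤ ‖z‖ :=
  (h.norm_eq_max z).symm ▸ le_max_right _ _

theorem apply_add_map_sub (h : IsMSummand P J) (z : Z) (w : E) : P (z + J (w - P z)) = w := by
  simp [h.left_inv]

theorem norm_add_map_sub (h : IsMSummand P J) (z : Z) (w : E) :
    ‖z + J (w - P z)‖ = max ‖w‖ ‖z - J (P z)‖ := by
  rw [h.norm_eq_max, h.apply_add_map_sub, map_sub J]
  congr 2
  abel

theorem norm_map (h : IsMSummand P J) (x : E) : ‖J x‖ = ‖x‖ := by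
  simpa [h.left_inv] using h.norm_eq_max (J x)

theorem norm_comp_le (h : IsMSummand P J) (f : StrongDual ℝ Z) : ‖f ∘L J‖ ≤ ‖f‖ :=
  ContinuousLinearMap.opNorm_le_bound _ (norm_nonneg f) fun x =>
    (f.le_opNorm (J x)).trans_eq (by rw [h.norm_map])

theorem norm_comp (h : IsMSummand P J) (g : StrongDual ℝ E) : ‖g ∘L P‖ = ‖g‖ := by
  refine le_antisymm (ContinuousLinearMap.opNorm_le_bound _ (norm_nonneg g) fun z => ?_)
    (ContinuousLinearMap.opNorm_le_bound _ (norm_nonneg _) fun x => ?_)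
  · exact (g.le_opNorm _).trans (by gcongr; exact h.norm_apply_le z)
  · simpa [h.left_inv, h.norm_map] using (g ∘L P).le_opNorm (J x)

theorem image_ballSlice_comp_subset (h : IsMSummand P J) (g : StrongDual ℝ E) (α : ℝ) :
    P '' ballSlice Z (g ∘L P) α ⊆ ballSlice E g α := by
  rintro _ ⟨z, ⟨hz, hgz⟩, rfl⟩
  rw [Metric.mem_closedBall, dist_zero_right] at hz
  exact ⟨by simpa using (h.norm_apply_le z).trans hz, hgz⟩

theorem propP2 (h : IsMSummand P J) (hZ : PropP2 Z) : PropP2 E := by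
  classical
  rintro C ⟨n, g, α, lam, hn, hg, hα, hlam, hsum, rfl⟩
  set Cz := ∑ i, lam i • ballSlice Z (g i ∘L P) (α i)
  have hmaps : MapsTo P Cz (∑ i, lam i • ballSlice E (g i) (α i)) := by
    rw [mapsTo_iff_image_subset, image_finsetSum]
    simp_rw [image_smul_set]
    exact sum_smul_subset_sum_smul fun i => h.image_ballSlice_comp_subset (g i) (α i)
  obtain ⟨z₀, hz₀, F, δ, hδ, hF⟩ :=
    hZ Cz ⟨n, _, α, lam, hn, fun i => by rw [h.norm_comp, hg i], hα, hlam, hsum, rfl⟩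
  have hz₀_norm : ‖z₀‖ ≤ 1 := by
    simpa using (convex_closedBall 0 1).sum_smul_subset hlam hsum (fun i _ hz => hz.1) hz₀
  refine ⟨P z₀, hmaps hz₀, F.image (· ∘L J), δ, hδ, fun w ⟨hw, hwF⟩ => ?_⟩
  rw [← h.apply_add_map_sub z₀ w]
  refine hmaps (hF ⟨?_, fun φ hφ => ?_⟩)
  · rw [Metric.mem_closedBall, dist_zero_right] at hw ⊢
    rw [h.norm_add_map_sub]
    exact max_le hw ((h.norm_sub_le z₀).trans hz₀_norm)
  · simpa using hwF _ (Finset.mem_image_of_mem _ hφ)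

end IsMSummand

end MSummand

section ClosedBallSlice

variable {E : Type*} [NormedAddCommGroup E] [NormedSpace ℝ E]

/-- The closed slice of `g / ‖g‖` at depth `β`, written so that it is the whole ball when
`g = 0`. -/
def closedBallSlice (g : StrongDual ℝ E) (β : ℝ) : Set E :=
  {x ∈ Metric.closedBall (0 : E) 1 | ‖g‖ * (1 - β) ≤ g x}

theorem exists_ballSlice_subset_closedBallSlice [Nontrivial E] (g : StrongDual ℝ E) (β : ℝ) :
    ∃ f : StrongDual ℝ E, ‖f‖ = 1 ∧ ballSlice E f β ⊆ closedBallSlice g β := by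
  by_cases hg : g = 0
  · obtain ⟨f, hf, -⟩ := exists_dual_vector' ℝ (0 : E)
    exact ⟨f, hf, fun x hx => ⟨hx.1, by simp [hg]⟩⟩
  · refine ⟨(‖g‖⁻¹ : ℝ) • g, norm_smul_inv_norm hg, fun x ⟨hx, hgx⟩ => ⟨hx, ?_⟩⟩
    have hg_pos : 0 < ‖g‖ := norm_pos_iff.2 hg
    rw [smul_apply, smul_eq_mul, lt_inv_mul_iff₀ hg_pos] at hgx
    exact hgx.le

theorem PropP2.exists_relWeakInteriorPt_sum_smul_closedBallSlice (hE : PropP2 E) {n : ℕ}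
    (hn : 0 < n) (g : Fin n → StrongDual ℝ E) (β lam : Fin n → ℝ) (hβ : ∀ i, 0 < β i)
    (hlam : ∀ i, 0 ≤ lam i) (hsum : ∑ i, lam i = 1) :
    ∃ x ∈ ∑ i, lam i • closedBallSlice (g i) (β i),
      RelWeakInteriorPt E (∑ i, lam i • closedBallSlice (g i) (β i)) x := by
  rcases subsingleton_or_nontrivial E with hE₀ | hE₀
  · have h0 : (0 : E) ∈ ∑ i, lam i • closedBallSlice (g i) (β i) :=
      mem_sum_smul_set_iff.2 ⟨0, fun i => by simp [closedBallSlice, Subsingleton.elim (g i) 0],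
        by simp⟩
    refine ⟨0, h0, ∅, 1, one_pos, fun w _ => ?_⟩
    rwa [Subsingleton.elim w 0]
  · choose f hf hsub using fun i => exists_ballSlice_subset_closedBallSlice (g i) (β i)
    obtain ⟨x, hx, hint⟩ := hE _ ⟨n, f, β, lam, hn, hf, hβ, hlam, hsum, rfl⟩
    exact ⟨x, sum_smul_subset_sum_smul hsub hx, hint.mono (sum_smul_subset_sum_smul hsub)⟩

end ClosedBallSlice

namespace WithLp

variable (X Y : Type*) [NormedAddCommGroup X] [NormedSpace ℝ X]
  [NormedAddCommGroup Y] [NormedSpace ℝ Y]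

def inlL : X →L[ℝ] WithLp ⊤ (X × Y) :=
  (prodContinuousLinearEquiv ⊤ ℝ X Y).symm.toContinuousLinearMap ∘L .inl ℝ X Y

def inrL : Y →L[ℝ] WithLp ⊤ (X × Y) :=
  (prodContinuousLinearEquiv ⊤ ℝ X Y).symm.toContinuousLinearMap ∘L .inr ℝ X Y

variable {X Y}

@[simp] theorem inlL_apply (x : X) : inlL X Y x = toLp ⊤ (x, 0) := rfl

@[simp] theorem inrL_apply (y : Y) : inrL X Y y = toLp ⊤ (0, y) := rfl

theorem isMSummand_fstL_inlL : IsMSummand (fstL ⊤ ℝ X Y) (inlL X Y) where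
  left_inv x := rfl
  norm_eq_max z := by simp [prod_norm_eq_sup]

theorem isMSummand_sndL_inrL : IsMSummand (sndL ⊤ ℝ X Y) (inrL X Y) where
  left_inv y := rfl
  norm_eq_max z := by simp [prod_norm_eq_sup, max_comm]

end WithLp

section Prod

open WithLp

variable {X Y : Type*} [NormedAddCommGroup X] [NormedSpace ℝ X]
  [NormedAddCommGroup Y] [NormedSpace ℝ Y]

theorem norm_le_norm_comp_inlL_add_norm_comp_inrL (f : StrongDual ℝ (WithLp ⊤ (X × Y))) :
    ‖f‖ ≤ ‖f ∘L inlL X Y‖ + ‖f ∘L inrL X Y‖ := by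
  refine ContinuousLinearMap.opNorm_le_bound _ (by positivity) fun z => ?_
  have hz : f z = (f ∘L inlL X Y) z.fst + (f ∘L inrL X Y) z.snd := by
    simp only [ContinuousLinearMap.comp_apply, inlL_apply, inrL_apply, ← map_add, ← toLp_add,
      Prod.mk_add_mk, add_zero, zero_add]
    rfl
  calc ‖f z‖ ≤ ‖f ∘L inlL X Y‖ * ‖z.fst‖ + ‖f ∘L inrL X Y‖ * ‖z.snd‖ := by
        rw [hz]
        exact (norm_add_le _ _).trans (add_le_add ((f ∘L inlL X Y).le_opNorm _)
          ((f ∘L inrL X Y).le_opNorm _))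
    _ ≤ (‖f ∘L inlL X Y‖ + ‖f ∘L inrL X Y‖) * ‖z‖ := by
        rw [add_mul]
        gcongr
        exacts [isMSummand_fstL_inlL.norm_apply_le z, isMSummand_sndL_inrL.norm_apply_le z]

theorem toLp_mem_ballSlice {f : StrongDual ℝ (WithLp ⊤ (X × Y))} (hf : ‖f‖ = 1) {α : ℝ}
    (hα : 0 < α) {x : X} {y : Y} (hx : x ∈ closedBallSlice (f ∘L inlL X Y) (α / 2))
    (hy : y ∈ closedBallSlice (f ∘L inrL X Y) (α / 2)) :
    toLp ⊤ (x, y) ∈ ballSlice _ f α := by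
  obtain ⟨hx, hfx⟩ := hx
  obtain ⟨hy, hfy⟩ := hy
  rw [Metric.mem_closedBall, dist_zero_right] at hx hy
  refine ⟨by simpa [Prod.norm_def] using max_le hx hy, ?_⟩
  have hxy : f (toLp ⊤ (x, y)) = (f ∘L inlL X Y) x + (f ∘L inrL X Y) y := by
    simp [← map_add, ← toLp_add]
  have ha := hf ▸ isMSummand_fstL_inlL.norm_comp_le f
  have hb := hf ▸ isMSummand_sndL_inrL.norm_comp_le f
  have hab := hf ▸ norm_le_norm_comp_inlL_add_norm_comp_inrL f
  -- `t ↦ t * (1 - α / 2)` exceeds `1 - α` at both ends of `[1, 2]`.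
  have : 1 - α < (‖f ∘L inlL X Y‖ + ‖f ∘L inrL X Y‖) * (1 - α / 2) := by
    rcases le_total 0 (1 - α / 2) with hc | hc <;> nlinarith
  linarith

theorem toLp_mem_sum_smul {ι : Type*} [Fintype ι] {lam : ι → ℝ} {A : ι → Set X}
    {B : ι → Set Y} {S : ι → Set (WithLp ⊤ (X × Y))}
    (hS : ∀ i, ∀ x ∈ A i, ∀ y ∈ B i, toLp ⊤ (x, y) ∈ S i) {x : X} {y : Y}
    (hx : x ∈ ∑ i, lam i • A i) (hy : y ∈ ∑ i, lam i • B i) :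
    toLp ⊤ (x, y) ∈ ∑ i, lam i • S i := by
  obtain ⟨c, hc, rfl⟩ := mem_sum_smul_set_iff.1 hx
  obtain ⟨d, hd, rfl⟩ := mem_sum_smul_set_iff.1 hy
  refine mem_sum_smul_set_iff.2 ⟨fun i => toLp ⊤ (c i, d i), fun i => hS i _ (hc i) _ (hd i), ?_⟩
  rw [prod_mk_sum, toLp_sum]
  rfl

theorem RelWeakInteriorPt.toLp {A : Set X} {B : Set Y} {x : X} {y : Y}
    (hA : RelWeakInteriorPt X A x) (hB : RelWeakInteriorPt Y B y) :
    RelWeakInteriorPt (WithLp ⊤ (X × Y)) {z | z.fst ∈ A ∧ z.snd ∈ B} (toLp ⊤ (x, y)) := by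
  classical
  obtain ⟨FA, δA, hδA, hA⟩ := hA
  obtain ⟨FB, δB, hδB, hB⟩ := hB
  refine ⟨FA.image (· ∘L fstL ⊤ ℝ X Y) ∪ FB.image (· ∘L sndL ⊤ ℝ X Y), min δA δB,
    lt_min hδA hδB, fun z ⟨hz, hzF⟩ => ⟨hA ⟨?_, fun φ hφ => ?_⟩, hB ⟨?_, fun φ hφ => ?_⟩⟩⟩
  · exact mem_closedBall_zero_iff.2 ((isMSummand_fstL_inlL.norm_apply_le z).trans
      (mem_closedBall_zero_iff.1 hz))
  · simpa using (hzF _ (Finset.mem_union_left _ (Finset.mem_image_of_mem _ hφ))).trans_le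
      (min_le_left _ _)
  · exact mem_closedBall_zero_iff.2 ((isMSummand_sndL_inrL.norm_apply_le z).trans
      (mem_closedBall_zero_iff.1 hz))
  · simpa using (hzF _ (Finset.mem_union_right _ (Finset.mem_image_of_mem _ hφ))).trans_le
      (min_le_right _ _)

theorem PropP2.withLp_prod (hX : PropP2 X) (hY : PropP2 Y) : PropP2 (WithLp ⊤ (X × Y)) := by
  rintro C ⟨n, f, α, lam, hn, hf, hα, hlam, hsum, rfl⟩
  obtain ⟨x, hx, hx_int⟩ := hX.exists_relWeakInteriorPt_sum_smul_closedBallSlice hn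
    (fun i => f i ∘L inlL X Y) (fun i => α i / 2) lam (fun i => half_pos (hα i)) hlam hsum
  obtain ⟨y, hy, hy_int⟩ := hY.exists_relWeakInteriorPt_sum_smul_closedBallSlice hn
    (fun i => f i ∘L inrL X Y) (fun i => α i / 2) lam (fun i => half_pos (hα i)) hlam hsum
  have hsub : {z : WithLp ⊤ (X × Y) |
      z.fst ∈ ∑ i, lam i • closedBallSlice (f i ∘L inlL X Y) (α i / 2) ∧
        z.snd ∈ ∑ i, lam i • closedBallSlice (f i ∘L inrL X Y) (α i / 2)} ⊆
      ∑ i, lam i • ballSlice _ (f i) (α i) := fun z ⟨hz₁, hz₂⟩ =>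
    toLp_mem_sum_smul (fun i _ hx' _ hy' => toLp_mem_ballSlice (hf i) (hα i) hx' hy') hz₁ hz₂
  exact ⟨toLp ⊤ (x, y), hsub ⟨hx, hy⟩, (hx_int.toLp hy_int).mono hsub⟩

end Prod

theorem propP2_infty_sum_iff_general
    {X Y : Type*} [NormedAddCommGroup X] [NormedSpace ℝ X]
    [NormedAddCommGroup Y] [NormedSpace ℝ Y] :
    PropP2 (WithLp ⊤ (X × Y)) ↔ PropP2 X ∧ PropP2 Y :=
  ⟨fun h => ⟨WithLp.isMSummand_fstL_inlL.propP2 h, WithLp.isMSummand_sndL_inrL.propP2 h⟩,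
    fun ⟨hX, hY⟩ => hX.withLp_prod hY⟩

/-- Every finite convex combination of slices of the closed unit
ball of `X ⊕_∞ Y` has nonempty interior in the relative weak topology of the closed
unit ball if and only if both `X` and `Y` have the corresponding property. -/
theorem propP2_infty_sum_iff
    {X Y : Type*} [NormedAddCommGroup X] [NormedSpace ℝ X] [CompleteSpace X]
    [NormedAddCommGroup Y] [NormedSpace ℝ Y] [CompleteSpace Y] :
    PropP2 (WithLp ⊤ (X × Y)) ↔ PropP2 X ∧ PropP2 Y :=
  propP2_infty_sum_iff_general
end
end

section
/- Let X and Y be Banach spaces and let C be a finite convex combination of slices of the closed unit ball of X. Then C × B_Y is a finite convex combination of slices of the closed unit ball of X ⊕_∞ Y; in particular, if every finite convex combination of slices of the unit ball of X ⊕_∞ Y is relatively weakly open (resp. has nonempty relative weak interior), then the same holds for X. -/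
open scoped Pointwise

noncomputable section

/-! Lifting each slice `S(f, α)` of `B_X` through the first coordinate gives the slice
`S(f ∘ fst, α)` of `B_{X ⊕_∞ Y}`, which is `S(f, α) × B_Y`; since `B_Y` is convex and the
coefficients sum to `1`, the convex combination of these products is `C × B_Y`.
For the transfer, `x ↦ (x, y)` maps `B_X` into `B_{X ⊕_∞ Y}` and pulls `C × B_Y` back to `C`,
so weak neighbourhoods in `X ⊕_∞ Y` pull back to weak neighbourhoods in `X`. -/

open Metric

section ConvexCombination

variable {ι 𝕜 E F : Type*} [Field 𝕜] [LinearOrder 𝕜] [IsStrictOrderedRing 𝕜]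
  [AddCommGroup E] [Module 𝕜 E] [AddCommGroup F] [Module 𝕜 F]

theorem Set.finsetSum_prod {α β : Type*} [AddCommMonoid α] [AddCommMonoid β] (t : Finset ι)
    (s : ι → Set α) (u : ι → Set β) :
    ∑ i ∈ t, s i ×ˢ u i = (∑ i ∈ t, s i) ×ˢ ∑ i ∈ t, u i := by
  induction t using Finset.cons_induction with
  | empty => simp
  | cons a t ha ih => simp only [Finset.sum_cons, ih, Set.prod_add_prod_comm]

theorem Convex.finsetSum_smul {K : Set E} (hK : Convex 𝕜 K) (hne : K.Nonempty)
    {t : Finset ι} {c : ι → 𝕜} (hc : ∀ i ∈ t, 0 ≤ c i) :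
    ∑ i ∈ t, c i • K = (∑ i ∈ t, c i) • K := by
  induction t using Finset.cons_induction with
  | empty => simp [Set.zero_smul_set hne]
  | cons a t ha ih =>
    rw [Finset.forall_mem_cons] at hc
    rw [Finset.sum_cons, Finset.sum_cons, ih hc.2,
      hK.add_smul hc.1 (Finset.sum_nonneg hc.2)]

theorem Convex.finsetSum_smul_prod {K : Set F} (hK : Convex 𝕜 K) (hne : K.Nonempty)
    {t : Finset ι} {c : ι → 𝕜} (hc : ∀ i ∈ t, 0 ≤ c i) (hc₁ : ∑ i ∈ t, c i = 1)
    (s : ι → Set E) :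
    ∑ i ∈ t, c i • (s i ×ˢ K) = (∑ i ∈ t, c i • s i) ×ˢ K := by
  simp only [Set.smul_set_prod, Set.finsetSum_prod, hK.finsetSum_smul hne hc, hc₁, one_smul]

theorem LinearEquiv.preimage_finsetSum_smul {R M N : Type*} [Semiring R] [AddCommMonoid M]
    [AddCommMonoid N] [Module R M] [Module R N] (e : M ≃ₗ[R] N) (t : Finset ι) (c : ι → R)
    (s : ι → Set N) :
    e ⁻¹' ∑ i ∈ t, c i • s i = ∑ i ∈ t, c i • e ⁻¹' s i := by
  simp only [← e.image_symm_eq_preimage, Set.image_finsetSum, image_smul_set]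

end ConvexCombination

theorem WithLp.opNorm_comp_fstL {𝕜 X Y F : Type*} [NontriviallyNormedField 𝕜]
    [SeminormedAddCommGroup X] [NormedSpace 𝕜 X] [SeminormedAddCommGroup Y] [NormedSpace 𝕜 Y]
    [SeminormedAddCommGroup F] [NormedSpace 𝕜 F] (p : ENNReal) [Fact (1 ≤ p)]
    (f : X →L[𝕜] F) : ‖f.comp (WithLp.fstL p 𝕜 X Y)‖ = ‖f‖ :=
  le_antisymm
    (ContinuousLinearMap.opNorm_le_bound _ (norm_nonneg f) fun w =>
      (f.le_opNorm _).trans (mul_le_mul_of_nonneg_left (WithLp.norm_fst_le X w) (norm_nonneg f)))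
    (f.opNorm_le_bound (norm_nonneg _) fun x => by
      simpa using (f.comp (WithLp.fstL p 𝕜 X Y)).le_opNorm (WithLp.toLp p (x, 0)))

theorem RelWeakInteriorPt.of_affine {Z W : Type*} [NormedAddCommGroup Z] [NormedSpace ℝ Z]
    [NormedAddCommGroup W] [NormedSpace ℝ W] (T : Z →L[ℝ] W) (c : W)
    (hball : ∀ z ∈ closedBall (0 : Z) 1, T z + c ∈ closedBall (0 : W) 1)
    {C : Set Z} {D : Set W} (hD : ∀ z, T z + c ∈ D → z ∈ C) {z : Z}
    (h : RelWeakInteriorPt W D (T z + c)) : RelWeakInteriorPt Z C z := by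
  classical
  obtain ⟨G, δ, hδ, hG⟩ := h
  refine ⟨G.image (·.comp T), δ, hδ, fun w ⟨hw, hwG⟩ => hD w (hG ⟨hball w hw, fun g hg => ?_⟩)⟩
  simpa using hwG _ (Finset.mem_image_of_mem _ hg)

theorem WithLp.mem_closedBall_zero_infty_iff {X Y : Type*} [SeminormedAddCommGroup X]
    [SeminormedAddCommGroup Y] {r : ℝ} (w : WithLp ⊤ (X × Y)) :
    w ∈ closedBall (0 : WithLp ⊤ (X × Y)) r ↔ w.fst ∈ closedBall 0 r ∧ w.snd ∈ closedBall 0 r := by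
  simp only [mem_closedBall_zero_iff, WithLp.prod_norm_eq_sup, sup_le_iff]

section InftySum

variable {X Y : Type*} [NormedAddCommGroup X] [NormedSpace ℝ X]
  [NormedAddCommGroup Y] [NormedSpace ℝ Y]

theorem ballSlice_comp_fstL (f : StrongDual ℝ X) (α : ℝ) :
    ballSlice (WithLp ⊤ (X × Y)) (f.comp (WithLp.fstL ⊤ ℝ X Y)) α =
      WithLp.ofLp ⁻¹' (ballSlice X f α ×ˢ closedBall (0 : Y) 1) := by
  ext w
  simp [ballSlice, WithLp.prod_norm_eq_sup, and_right_comm]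

theorem IsCCS.preimage_prod_closedBall {C : Set X} (hC : IsCCS X C) :
    IsCCS (WithLp ⊤ (X × Y)) (WithLp.ofLp ⁻¹' (C ×ˢ closedBall (0 : Y) 1)) := by
  obtain ⟨n, f, α, c, hn, hf, hα, hc, hc₁, rfl⟩ := hC
  refine ⟨n, fun i => (f i).comp (WithLp.fstL ⊤ ℝ X Y), α, c, hn,
    fun i => (WithLp.opNorm_comp_fstL ⊤ (f i)).trans (hf i), hα, hc, hc₁, ?_⟩
  rw [← (convex_closedBall (0 : Y) 1).finsetSum_smul_prod (nonempty_closedBall.2 zero_le_one)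
    (fun i _ => hc i) hc₁]
  simp only [ballSlice_comp_fstL]
  exact (WithLp.linearEquiv ⊤ ℝ (X × Y)).preimage_finsetSum_smul _ _ _

theorem RelWeakInteriorPt.of_prod_closedBall {C : Set X} {x : X} {y : Y}
    (hy : y ∈ closedBall (0 : Y) 1)
    (h : RelWeakInteriorPt (WithLp ⊤ (X × Y)) (WithLp.ofLp ⁻¹' (C ×ˢ closedBall (0 : Y) 1))
      (WithLp.toLp ⊤ (x, y))) :
    RelWeakInteriorPt X C x := by
  let T : X →L[ℝ] WithLp ⊤ (X × Y) :=
    (WithLp.prodContinuousLinearEquiv ⊤ ℝ X Y).symm.toContinuousLinearMap ∘L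
      ContinuousLinearMap.inl ℝ X Y
  have hT : ∀ x', WithLp.toLp ⊤ (x', y) = T x' + WithLp.toLp ⊤ (0, y) := fun x' => by
    simp [T, ← WithLp.toLp_add]
  rw [hT] at h
  refine h.of_affine T _ (fun w hw => ?_) (fun w hw => by simpa [← hT] using hw.1)
  rw [← hT, WithLp.mem_closedBall_zero_infty_iff]
  exact ⟨hw, hy⟩

end InftySum

theorem ccs_prod_ball_infty_sum_general
    {X Y : Type*} [NormedAddCommGroup X] [NormedSpace ℝ X]
    [NormedAddCommGroup Y] [NormedSpace ℝ Y] :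
    (∀ C : Set X, IsCCS X C →
      IsCCS (WithLp ⊤ (X × Y))
        {w : WithLp ⊤ (X × Y) | (WithLp.equiv ⊤ (X × Y) w).1 ∈ C ∧
          (WithLp.equiv ⊤ (X × Y) w).2 ∈ Metric.closedBall (0 : Y) 1}) ∧
    (PropP1 (WithLp ⊤ (X × Y)) → PropP1 X) ∧
    (PropP2 (WithLp ⊤ (X × Y)) → PropP2 X) := by
  have h0 : (0 : Y) ∈ closedBall (0 : Y) 1 := mem_closedBall_self zero_le_one
  refine ⟨fun C hC => hC.preimage_prod_closedBall, fun hP1 C hC x hx => ?_, fun hP2 C hC => ?_⟩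
  · exact (hP1 _ hC.preimage_prod_closedBall (WithLp.toLp ⊤ (x, 0)) ⟨hx, h0⟩).of_prod_closedBall h0
  · obtain ⟨z, hz, hint⟩ := hP2 _ (hC.preimage_prod_closedBall (Y := Y))
    exact ⟨z.fst, hz.1, hint.of_prod_closedBall hz.2⟩

/-- For a finite convex combination of slices `C` of the closed
unit ball of `X`, the set `C × B_Y` is a finite convex combination of slices of the
closed unit ball of `X ⊕_∞ Y`; in particular, if every finite convex combination of
slices of the unit ball of `X ⊕_∞ Y` is relatively weakly open (resp. has nonempty
relative weak interior), then the same holds for `X`. -/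
theorem ccs_prod_ball_infty_sum
    {X Y : Type*} [NormedAddCommGroup X] [NormedSpace ℝ X] [CompleteSpace X]
    [NormedAddCommGroup Y] [NormedSpace ℝ Y] [CompleteSpace Y] :
    (∀ C : Set X, IsCCS X C →
      IsCCS (WithLp ⊤ (X × Y))
        {w : WithLp ⊤ (X × Y) | (WithLp.equiv ⊤ (X × Y) w).1 ∈ C ∧
          (WithLp.equiv ⊤ (X × Y) w).2 ∈ Metric.closedBall (0 : Y) 1}) ∧
    (PropP1 (WithLp ⊤ (X × Y)) → PropP1 X) ∧
    (PropP2 (WithLp ⊤ (X × Y)) → PropP2 X) :=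
  ccs_prod_ball_infty_sum_general
end
end
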